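/- Let N : ℝ → ℝ be a nondecreasing function. Suppose there exist R > 1 and a sequence of pairs x_k < y_k with y_k − x_k → 0 such that N(y_k) − N(x_k) ≥ R^{−k} and (log(y_k − x_k))/k → −∞. Then N is not Hölder continuous: for every γ > 0 and every δ > 0 there exist x < y with y − x < δ and N(y) − N(x) > (y − x)^γ. -/

import Mathlib

/-! A superexponentially small interval length `ℓ_k` satisfies `ℓ_k ^ γ < R ^ (-k)` for large
`k`, whatever `γ > 0`, while the increment of `N` over that interval is at least `R ^ (-k)`. -/

open Filter Real

lemma eventually_lt_exp_mul_of_tendsto_log_div_atBot {a : ℕ → ℝ} (ha : ∀ k, 0 < a k)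
    (h : Tendsto (fun k : ℕ => log (a k) / k) atTop atBot) (c : ℝ) :
    ∀ᶠ k : ℕ in atTop, a k < exp (c * k) := by
  filter_upwards [h.eventually_lt_atBot c, eventually_ge_atTop 1] with k hlog hk
  have hk_pos : (0 : ℝ) < k := by exact_mod_cast hk
  calc a k = exp (log (a k)) := (exp_log (ha k)).symm
    _ < exp (c * k) := exp_lt_exp.2 ((div_lt_iff₀ hk_pos).1 hlog)

lemma tendsto_log_rpow_div_atBot {a : ℕ → ℝ} (ha : ∀ k, 0 < a k)
    (h : Tendsto (fun k : ℕ => log (a k) / k) atTop atBot) {γ : ℝ} (hγ : 0 < γ) :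
    Tendsto (fun k : ℕ => log (a k ^ γ) / k) atTop atBot := by
  simpa only [log_rpow (ha _), mul_div_assoc] using h.const_mul_atBot hγ

theorem not_holder_of_supergeometric_intervals_general
    (N : ℝ → ℝ) (R : ℝ) (hR : 1 < R)
    (x y : ℕ → ℝ) (hxy : ∀ k, x k < y k)
    (hlen : Filter.Tendsto (fun k => y k - x k) Filter.atTop (nhds 0))
    (hmass : ∀ k : ℕ, R ^ (-(k : ℝ)) ≤ N (y k) - N (x k))
    (hsuper : Filter.Tendsto (fun k : ℕ => Real.log (y k - x k) / k)
      Filter.atTop Filter.atBot) :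
    ∀ γ : ℝ, 0 < γ → ∀ δ : ℝ, 0 < δ →
      ∃ u v : ℝ, u < v ∧ v - u < δ ∧ (v - u) ^ γ < N v - N u := by
  intro γ hγ δ hδ
  have hpos : ∀ k, 0 < y k - x k := fun k => sub_pos.2 (hxy k)
  have hsmall := eventually_lt_exp_mul_of_tendsto_log_div_atBot
    (fun k => rpow_pos_of_pos (hpos k) γ)
    (tendsto_log_rpow_div_atBot hpos hsuper hγ) (-log R)
  obtain ⟨k, hk_small, hk_short⟩ := (hsmall.and (hlen.eventually (gt_mem_nhds hδ))).exists
  refine ⟨x k, y k, hxy k, hk_short, ?_⟩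
  calc (y k - x k) ^ γ < exp (-log R * k) := hk_small
    _ = R ^ (-(k : ℝ)) := by rw [rpow_def_of_pos (by linarith)]; ring_nf
    _ ≤ N (y k) - N (x k) := hmass k

theorem not_holder_of_supergeometric_intervals
    (N : ℝ → ℝ) (hN : Monotone N) (R : ℝ) (hR : 1 < R)
    (x y : ℕ → ℝ) (hxy : ∀ k, x k < y k)
    (hlen : Filter.Tendsto (fun k => y k - x k) Filter.atTop (nhds 0))
    (hmass : ∀ k : ℕ, R ^ (-(k : ℝ)) ≤ N (y k) - N (x k))
    (hsuper : Filter.Tendsto (fun k : ℕ => Real.log (y k - x k) / k)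
      Filter.atTop Filter.atBot) :
    ∀ γ : ℝ, 0 < γ → ∀ δ : ℝ, 0 < δ →
      ∃ u v : ℝ, u < v ∧ v - u < δ ∧ (v - u) ^ γ < N v - N u :=
  not_holder_of_supergeometric_intervals_general N R hR x y hxy hlen hmass hsuper
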